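/- arXiv:2202.13598 — 3 statements merged into one kernel-verified Lean document; each statement's English description precedes it below -/
import Mathlib

section
/- Let h : ℝ → ℝ be twice continuously differentiable and γ > 0. Suppose h(0) ≥ 0, ḣ(0) + γ h(0) ≥ 0, and ḧ(t) + 2γ ḣ(t) + γ² h(t) ≥ 0 for all t ≥ 0. Then h(t) ≥ 0 for all t ≥ 0. -/
/-! With `g = ḣ + γ h` the condition factors as `(d/dt + γ) g ≥ 0`, and `(d/dt + γ) f ≥ 0`
says exactly that `e^{γt} f(t)` is nondecreasing. So `g(0) ≥ 0` propagates to `g ≥ 0`,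
i.e. `(d/dt + γ) h ≥ 0`, and the same argument once more propagates `h(0) ≥ 0` to `h ≥ 0`. -/

theorem HasDerivAt.exp_mul_mul {f : ℝ → ℝ} {f' : ℝ} {γ t : ℝ} (hf : HasDerivAt f f' t) :
    HasDerivAt (fun s => Real.exp (γ * s) * f s) (Real.exp (γ * t) * (f' + γ * f t)) t := by
  have hexp : HasDerivAt (fun s => Real.exp (γ * s)) (Real.exp (γ * t) * γ) t := by
    simpa using ((hasDerivAt_id t).const_mul γ).exp
  exact (hexp.mul hf).congr_deriv (by ring)

theorem monotoneOn_exp_mul_mul_of_deriv_add_mul_nonneg {f f' : ℝ → ℝ} {γ a : ℝ}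
    (hf : ∀ t, HasDerivAt f (f' t) t) (hineq : ∀ t ≥ a, 0 ≤ f' t + γ * f t) :
    MonotoneOn (fun s => Real.exp (γ * s) * f s) (Set.Ici a) := by
  refine monotoneOn_of_hasDerivWithinAt_nonneg (convex_Ici a)
    (fun t _ => (hf t).exp_mul_mul.continuousAt.continuousWithinAt)
    (fun t _ => (hf t).exp_mul_mul.hasDerivWithinAt) fun t ht => ?_
  rw [interior_Ici] at ht
  exact mul_nonneg (Real.exp_nonneg _) (hineq t (le_of_lt ht))

theorem nonneg_of_deriv_add_mul_nonneg {f f' : ℝ → ℝ} {γ a : ℝ}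
    (hf : ∀ t, HasDerivAt f (f' t) t) (ha : 0 ≤ f a) (hineq : ∀ t ≥ a, 0 ≤ f' t + γ * f t) :
    ∀ t ≥ a, 0 ≤ f t := by
  intro t ht
  have hmono := monotoneOn_exp_mul_mul_of_deriv_add_mul_nonneg hf hineq
    Set.self_mem_Ici (Set.mem_Ici.mpr ht) ht
  have hprod : 0 ≤ Real.exp (γ * t) * f t :=
    (mul_nonneg (Real.exp_nonneg _) ha).trans hmono
  exact nonneg_of_mul_nonneg_right hprod (Real.exp_pos _)

theorem ecbf_degree_two_general (h h' h'' : ℝ → ℝ) (γ : ℝ)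
    (hderiv : ∀ t, HasDerivAt h (h' t) t)
    (hderiv' : ∀ t, HasDerivAt h' (h'' t) t)
    (h0 : 0 ≤ h 0) (hd0 : 0 ≤ h' 0 + γ * h 0)
    (hcond : ∀ t ≥ 0, h'' t + 2 * γ * h' t + γ ^ 2 * h t ≥ 0) :
    ∀ t ≥ 0, h t ≥ 0 := by
  have hg : ∀ t ≥ 0, 0 ≤ h' t + γ * h t :=
    nonneg_of_deriv_add_mul_nonneg (fun t => (hderiv' t).add ((hderiv t).const_mul γ)) hd0
      fun t ht => by linear_combination hcond t ht
  exact nonneg_of_deriv_add_mul_nonneg hderiv h0 hg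

theorem ecbf_degree_two (h h' h'' : ℝ → ℝ) (γ : ℝ) (hγ : 0 < γ)
    (hderiv : ∀ t, HasDerivAt h (h' t) t)
    (hderiv' : ∀ t, HasDerivAt h' (h'' t) t) (hcont : Continuous h'')
    (h0 : 0 ≤ h 0) (hd0 : 0 ≤ h' 0 + γ * h 0)
    (hcond : ∀ t ≥ 0, h'' t + 2 * γ * h' t + γ ^ 2 * h t ≥ 0) :
    ∀ t ≥ 0, h t ≥ 0 :=
  ecbf_degree_two_general h h' h'' γ hderiv hderiv' h0 hd0 hcond
end

section
/- Let v : ℝ → ℝ be continuously differentiable with v' = u - κ v, where κ ≥ κ_low > 0, and let h(t) = V² - v(t)². Suppose |v(0)| ≤ V and for all t ≥ 0 the control satisfies 2 v(t) u(t) ≤ 2 κ_low v(t)² + γ (V² - v(t)²) with γ > 0. Then |v(t)| ≤ V for all t ≥ 0. -/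
/-!
The barrier `h = V² - v²` satisfies `ḣ = -2 v u + 2 κ v²`; replacing the unknown friction `κ` by
its lower bound `κ_low` only decreases `2 κ v²`, so the control condition gives `ḣ ≥ -γ h`.
Then `h(t) e^{γ t}` is nondecreasing, hence stays `≥ h(0) ≥ 0`, i.e. `v² ≤ V²` for all `t ≥ 0`.
-/

open Real Set

theorem monotoneOn_mul_exp_of_hasDerivAt_ge_neg_mul {h h' : ℝ → ℝ} {γ : ℝ}
    (hd : ∀ t ≥ 0, HasDerivAt h (h' t) t) (hge : ∀ t ≥ 0, -γ * h t ≤ h' t) :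
    MonotoneOn (fun t => h t * exp (γ * t)) (Ici 0) := by
  have hd' : ∀ t ≥ 0, HasDerivAt (fun t => h t * exp (γ * t))
      ((h' t + γ * h t) * exp (γ * t)) t := fun t ht =>
    ((hd t ht).mul ((hasDerivAt_id' t).const_mul γ).exp).congr_deriv (by ring)
  refine monotoneOn_of_hasDerivWithinAt_nonneg (f' := fun t => (h' t + γ * h t) * exp (γ * t))
    (convex_Ici 0) (fun t ht => (hd' t ht).continuousAt.continuousWithinAt)
    (fun t ht => ?_) (fun t ht => ?_) <;> rw [interior_Ici] at ht
  · exact (hd' t ht.le).hasDerivWithinAt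
  · have : 0 ≤ h' t + γ * h t := by linarith [hge t ht.le]
    positivity

theorem nonneg_of_hasDerivAt_ge_neg_mul {h h' : ℝ → ℝ} {γ : ℝ}
    (hd : ∀ t ≥ 0, HasDerivAt h (h' t) t) (hge : ∀ t ≥ 0, -γ * h t ≤ h' t) (h0 : 0 ≤ h 0) :
    ∀ t ≥ 0, 0 ≤ h t := by
  intro t ht
  have hmono := monotoneOn_mul_exp_of_hasDerivAt_ge_neg_mul hd hge self_mem_Ici ht ht
  simp only [mul_zero, exp_zero, mul_one] at hmono
  exact nonneg_of_mul_nonneg_left (h0.trans hmono) (exp_pos _)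

theorem velocity_saturation_certificate_general (v u : ℝ → ℝ) (κ κ_low V γ : ℝ)
    (hκ : κ_low ≤ κ)
    (hode : ∀ t, HasDerivAt v (u t - κ * v t) t)
    (hv0 : |v 0| ≤ V)
    (hcond : ∀ t ≥ 0, 2 * v t * u t ≤ 2 * κ_low * (v t) ^ 2 + γ * (V ^ 2 - (v t) ^ 2)) :
    ∀ t ≥ 0, |v t| ≤ V := by
  have hbarrier : ∀ t ≥ 0, HasDerivAt (fun t => V ^ 2 - v t ^ 2)
      (-(2 * v t * (u t - κ * v t))) t := fun t _ =>
    (((hode t).pow 2).const_sub (V ^ 2)).congr_deriv (by ring)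
  have hecbf : ∀ t ≥ 0, -γ * (V ^ 2 - v t ^ 2) ≤ -(2 * v t * (u t - κ * v t)) := fun t ht => by
    have hfriction : κ_low * v t ^ 2 ≤ κ * v t ^ 2 :=
      mul_le_mul_of_nonneg_right hκ (sq_nonneg _)
    linarith [hcond t ht]
  have hV : 0 ≤ V := (abs_nonneg _).trans hv0
  have h0 : 0 ≤ V ^ 2 - v 0 ^ 2 :=
    sub_nonneg.mpr (sq_le_sq.mpr (hv0.trans (le_abs_self V)))
  intro t ht
  have hsq := nonneg_of_hasDerivAt_ge_neg_mul hbarrier hecbf h0 t ht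
  exact abs_le_of_sq_le_sq (sub_nonneg.mp hsq) hV

theorem velocity_saturation_certificate (v u : ℝ → ℝ) (κ κ_low V γ : ℝ)
    (hlow : 0 < κ_low) (hκ : κ_low ≤ κ) (hγ : 0 < γ)
    (hu : Continuous u)
    (hode : ∀ t, HasDerivAt v (u t - κ * v t) t)
    (hv0 : |v 0| ≤ V)
    (hcond : ∀ t ≥ 0, 2 * v t * u t ≤ 2 * κ_low * (v t) ^ 2 + γ * (V ^ 2 - (v t) ^ 2)) :
    ∀ t ≥ 0, |v t| ≤ V :=
  velocity_saturation_certificate_general v u κ κ_low V γ hκ hode hv0 hcond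
end

section
/- Let p, v : ℝ → ℝ satisfy ṗ = v, v̇ = u - κ v with 0 < κ ≤ κ_up, and define h(t) = (L̄ - r)² - (p(t) - L̄)² with 0 < r < L̄. Suppose h(0) ≥ 0, ḣ(0) + γ h(0) ≥ 0 for some γ > 0, and for all t ≥ 0 the control satisfies 2(p - L̄)u ≤ -2κ_up|(p - L̄)v| - 2v² + γ² h + 2γ ḣ, where ḣ = -2(p - L̄)v. Then h(t) ≥ 0 for all t ≥ 0, i.e., r ≤ p(t) ≤ 2L̄ - r for all t ≥ 0. -/
/-!
The barrier `h = (L - r)² - (p - L)²` satisfies `ḣ = -2 (p - L) v` and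
`ḧ = -2 v² - 2 (p - L) (u - κ v)`. Since `0 ≤ κ ≤ κ_up`, the unknown friction term obeys
`2 (p - L) κ v ≥ -2 κ_up |(p - L) v|`, so the control constraint gives the exponential CBF condition
`ḧ + 2 γ ḣ + γ² h ≥ 0`. Writing this as `ψ̇ + γ ψ ≥ 0` for `ψ = ḣ + γ h`, two applications of the
comparison principle `ḟ + γ f ≥ 0, f(0) ≥ 0 ⟹ f ≥ 0` give first `ψ ≥ 0` and then `h ≥ 0`.
-/

open Set

-- The integrating factor makes `t ↦ exp (γ t) * f t` monotone on `[a, ∞)`.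
theorem nonneg_of_hasDerivAt_add_mul_nonneg {f f' : ℝ → ℝ} {γ a : ℝ}
    (hf : ∀ t ≥ a, HasDerivAt f (f' t) t) (ha : 0 ≤ f a)
    (hineq : ∀ t ≥ a, 0 ≤ f' t + γ * f t) :
    ∀ t ≥ a, 0 ≤ f t := by
  set g : ℝ → ℝ := fun t => Real.exp (γ * t) * f t
  have hg : ∀ t ≥ a, HasDerivAt g (Real.exp (γ * t) * (f' t + γ * f t)) t := fun t ht => by
    have hexp := ((hasDerivAt_id t).const_mul γ).exp
    exact (hexp.mul (hf t ht)).congr_deriv (by simp only [id, mul_one]; ring)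
  have hmono : MonotoneOn g (Ici a) := by
    refine monotoneOn_of_deriv_nonneg (convex_Ici a)
      (fun t ht => (hg t ht).continuousAt.continuousWithinAt) (fun t ht => ?_) (fun t ht => ?_)
    · exact (hg t (le_of_lt (by simpa using ht))).differentiableAt.differentiableWithinAt
    · rw [(hg t (le_of_lt (by simpa using ht))).deriv]
      exact mul_nonneg (Real.exp_pos _).le (hineq t (le_of_lt (by simpa using ht)))
  intro t ht
  have hgt : g a ≤ g t := hmono self_mem_Ici ht ht
  have hga : 0 ≤ g a := mul_nonneg (Real.exp_pos _).le ha
  exact nonneg_of_mul_nonneg_right (hga.trans hgt) (Real.exp_pos _)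

theorem nonneg_of_exponential_cbf {f f' f'' : ℝ → ℝ} {γ a : ℝ}
    (hf : ∀ t ≥ a, HasDerivAt f (f' t) t) (hf' : ∀ t ≥ a, HasDerivAt f' (f'' t) t)
    (ha : 0 ≤ f a) (ha' : 0 ≤ f' a + γ * f a)
    (hineq : ∀ t ≥ a, 0 ≤ f'' t + 2 * γ * f' t + γ ^ 2 * f t) :
    ∀ t ≥ a, 0 ≤ f t := by
  have hψ : ∀ t ≥ a, 0 ≤ f' t + γ * f t := by
    refine nonneg_of_hasDerivAt_add_mul_nonneg (f' := fun t => f'' t + γ * f' t) (γ := γ)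
      (fun t ht => (hf' t ht).add ((hf t ht).const_mul γ)) ha' (fun t ht => ?_)
    linarith [hineq t ht]
  exact nonneg_of_hasDerivAt_add_mul_nonneg hf ha hψ

theorem hasDerivAt_barrier {p : ℝ → ℝ} {v L R t : ℝ} (hp : HasDerivAt p v t) :
    HasDerivAt (fun s => R ^ 2 - (p s - L) ^ 2) (-2 * (p t - L) * v) t := by
  exact (((hp.sub_const L).pow 2).const_sub (R ^ 2)).congr_deriv (by ring)

theorem hasDerivAt_barrier_deriv {p v : ℝ → ℝ} {a L t : ℝ}
    (hp : HasDerivAt p (v t) t) (hv : HasDerivAt v a t) :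
    HasDerivAt (fun s => -2 * (p s - L) * v s) (-2 * v t ^ 2 - 2 * (p t - L) * a) t := by
  exact (((hp.sub_const L).const_mul (-2)).mul hv).congr_deriv (by ring)

theorem neg_mul_abs_le_mul {κ κ_up x : ℝ} (hκ : 0 ≤ κ) (hup : κ ≤ κ_up) :
    -(κ_up * |x|) ≤ κ * x :=
  calc -(κ_up * |x|) ≤ -(κ * |x|) := neg_le_neg (mul_le_mul_of_nonneg_right hup (abs_nonneg x))
    _ = κ * -|x| := by ring
    _ ≤ κ * x := mul_le_mul_of_nonneg_left (neg_abs_le x) hκ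

theorem playground_certificate_general (p v u : ℝ → ℝ) (κ κ_up L r γ : ℝ)
    (hκ : 0 < κ) (hup : κ ≤ κ_up) (hrL : r < L)
    (hp : ∀ t, HasDerivAt p (v t) t)
    (hv : ∀ t, HasDerivAt v (u t - κ * v t) t)
    (h0 : 0 ≤ (L - r) ^ 2 - (p 0 - L) ^ 2)
    (hd0 : 0 ≤ -2 * (p 0 - L) * v 0 + γ * ((L - r) ^ 2 - (p 0 - L) ^ 2))
    (hcond : ∀ t ≥ 0,
      2 * (p t - L) * u t ≤ -2 * κ_up * |(p t - L) * v t| - 2 * (v t) ^ 2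
        + γ ^ 2 * ((L - r) ^ 2 - (p t - L) ^ 2) + 2 * γ * (-2 * (p t - L) * v t)) :
    ∀ t ≥ 0, 0 ≤ (L - r) ^ 2 - (p t - L) ^ 2 ∧ r ≤ p t ∧ p t ≤ 2 * L - r := by
  have hh : ∀ t ≥ 0, 0 ≤ (L - r) ^ 2 - (p t - L) ^ 2 := by
    refine nonneg_of_exponential_cbf (fun t _ => hasDerivAt_barrier (hp t))
      (fun t _ => hasDerivAt_barrier_deriv (hp t) (hv t)) h0 hd0 (fun t ht => ?_)
    have hfriction := neg_mul_abs_le_mul (x := (p t - L) * v t) hκ.le hup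
    linarith [hcond t ht]
  intro t ht
  obtain ⟨hlow, hhigh⟩ := abs_le_of_sq_le_sq' (sub_nonneg.mp (hh t ht)) (sub_nonneg.mpr hrL.le)
  exact ⟨hh t ht, by linarith, by linarith⟩

theorem playground_certificate (p v u : ℝ → ℝ) (κ κ_up L r γ : ℝ)
    (hκ : 0 < κ) (hup : κ ≤ κ_up) (hr : 0 < r) (hrL : r < L) (hγ : 0 < γ)
    (hu : Continuous u)
    (hp : ∀ t, HasDerivAt p (v t) t)
    (hv : ∀ t, HasDerivAt v (u t - κ * v t) t)
    (h0 : 0 ≤ (L - r) ^ 2 - (p 0 - L) ^ 2)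
    (hd0 : 0 ≤ -2 * (p 0 - L) * v 0 + γ * ((L - r) ^ 2 - (p 0 - L) ^ 2))
    (hcond : ∀ t ≥ 0,
      2 * (p t - L) * u t ≤ -2 * κ_up * |(p t - L) * v t| - 2 * (v t) ^ 2
        + γ ^ 2 * ((L - r) ^ 2 - (p t - L) ^ 2) + 2 * γ * (-2 * (p t - L) * v t)) :
    ∀ t ≥ 0, 0 ≤ (L - r) ^ 2 - (p t - L) ^ 2 ∧ r ≤ p t ∧ p t ≤ 2 * L - r :=
  playground_certificate_general p v u κ κ_up L r γ hκ hup hrL hp hv h0 hd0 hcond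
end
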